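/- Let α ∈ (0,1) and let f₁ be a holomorphic function on the open unit disk 𝔻 with Re f₁(z) > 0 for all z ∈ 𝔻, such that (1-z)·f₁(z) → 2/α as z tends nontangentially to 1. Then for every z ∈ 𝔻 one has Re f₁(z) ≥ (1/α)·(1 - |z|²)/|1 - z|². -/

import Mathlib

noncomputable section

open Complex Filter

/-- The open unit disk in the complex plane. -/
def unitDisk : Set ℂ := {z : ℂ | ‖z‖ < 1}

/-- The Stolz region with parameter `K` at the boundary point `1`. -/
def stolzRegion (K : ℝ) : Set ℂ :=
  {z : ℂ | ‖z‖ < 1 ∧ ‖z - 1‖ < K * (1 - ‖z‖)}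

/-!
Schwarz's lemma applied to `w ↦ (f (φ w) - f a) / (f (φ w) + conj (f a))`, where `φ` is the
involution of the disk exchanging `0` and `a`, gives the Schwarz–Pick inequality for maps of the
disk into the right half-plane:
`(1 - |a|²) (1 - |z|²) |f z + conj (f a)|² ≤ 4 Re f(a) Re f(z) |1 - conj a z|²`.
Take `a = r ∈ (0, 1)` and multiply by `1 - r`; both sides then depend on `f(r)` only through
`(1 - r) f(r)`, which tends to `2 / α` as `r → 1⁻` because the radius lies in a Stolz angle.
In the limit, `(1 - |z|²) · 4 / α² ≤ (4 / α) Re f(z) |1 - z|²`.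
-/

open Metric
open scoped ComplexConjugate Topology

namespace Complex

def diskInvolution (a z : ℂ) : ℂ := (a - z) / (1 - conj a * z)

section DiskInvolution

variable {a z : ℂ}

lemma normSq_one_sub_conj_mul_sub_normSq_sub (a z : ℂ) :
    normSq (1 - conj a * z) - normSq (a - z) = (1 - normSq a) * (1 - normSq z) := by
  simp only [normSq_apply, sub_re, sub_im, mul_re, mul_im, one_re, one_im, conj_re, conj_im]
  ring

lemma normSq_lt_one_of_mem_ball (hz : z ∈ ball (0 : ℂ) 1) : normSq z < 1 := by
  rw [← Complex.sq_norm, sq_lt_one_iff₀ (norm_nonneg z)]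
  exact mem_ball_zero_iff.mp hz

lemma one_sub_conj_mul_ne_zero (ha : a ∈ ball (0 : ℂ) 1) (hz : z ∈ ball (0 : ℂ) 1) :
    1 - conj a * z ≠ 0 := by
  intro h
  have := normSq_one_sub_conj_mul_sub_normSq_sub a z
  rw [h, normSq_zero] at this
  nlinarith [normSq_nonneg (a - z), normSq_lt_one_of_mem_ball ha, normSq_lt_one_of_mem_ball hz]

lemma diskInvolution_mem_ball (ha : a ∈ ball (0 : ℂ) 1) (hz : z ∈ ball (0 : ℂ) 1) :
    diskInvolution a z ∈ ball (0 : ℂ) 1 := by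
  have hpos : 0 < (1 - normSq a) * (1 - normSq z) := mul_pos
    (sub_pos.mpr (normSq_lt_one_of_mem_ball ha)) (sub_pos.mpr (normSq_lt_one_of_mem_ball hz))
  rw [mem_ball_zero_iff, diskInvolution, norm_div,
    div_lt_one (norm_pos_iff.mpr (one_sub_conj_mul_ne_zero ha hz)), ← sq_lt_sq₀ (norm_nonneg _)
    (norm_nonneg _), Complex.sq_norm, Complex.sq_norm]
  linarith [normSq_one_sub_conj_mul_sub_normSq_sub a z]

lemma mapsTo_diskInvolution (ha : a ∈ ball (0 : ℂ) 1) :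
    Set.MapsTo (diskInvolution a) (ball 0 1) (ball 0 1) :=
  fun _ hz => diskInvolution_mem_ball ha hz

lemma diskInvolution_diskInvolution (ha : a ∈ ball (0 : ℂ) 1) (hz : z ∈ ball (0 : ℂ) 1) :
    diskInvolution a (diskInvolution a z) = z := by
  have hz' : 1 - conj a * z ≠ 0 := one_sub_conj_mul_ne_zero ha hz
  have ha' : 1 - conj a * a ≠ 0 := by
    rw [mul_comm, mul_conj]
    exact_mod_cast (sub_pos.mpr (normSq_lt_one_of_mem_ball ha)).ne'
  have hnum : a - (a - z) / (1 - conj a * z) = z * (1 - conj a * a) / (1 - conj a * z) := by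
    rw [eq_div_iff hz', sub_mul, div_mul_cancel₀ _ hz']
    ring
  have hden : 1 - conj a * ((a - z) / (1 - conj a * z)) = (1 - conj a * a) / (1 - conj a * z) := by
    rw [eq_div_iff hz', sub_mul, mul_assoc, div_mul_cancel₀ _ hz']
    ring
  rw [diskInvolution, diskInvolution, hnum, hden, div_div_div_cancel_right₀ hz',
    mul_div_cancel_right₀ _ ha']

lemma diskInvolution_zero (a : ℂ) : diskInvolution a 0 = a := by
  simp [diskInvolution]

lemma differentiableOn_diskInvolution (ha : a ∈ ball (0 : ℂ) 1) :
    DifferentiableOn ℂ (diskInvolution a) (ball 0 1) :=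
  ((differentiableOn_const a).sub differentiableOn_id).div
    ((differentiableOn_const 1).sub ((differentiableOn_const _).mul differentiableOn_id))
    fun _ hz => one_sub_conj_mul_ne_zero ha hz

end DiskInvolution

lemma normSq_add_conj_sub_normSq_sub (p q : ℂ) :
    normSq (p + conj q) - normSq (p - q) = 4 * p.re * q.re := by
  simp only [normSq_apply, add_re, add_im, sub_re, sub_im, conj_re, conj_im]
  ring

section RightHalfPlane

variable {p q : ℂ}

lemma norm_sub_lt_norm_add_conj (hp : 0 < p.re) (hq : 0 < q.re) : ‖p - q‖ < ‖p + conj q‖ := by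
  rw [← sq_lt_sq₀ (norm_nonneg _) (norm_nonneg _), Complex.sq_norm, Complex.sq_norm]
  nlinarith [normSq_add_conj_sub_normSq_sub p q]

lemma add_conj_ne_zero (hp : 0 < p.re) (hq : 0 < q.re) : p + conj q ≠ 0 :=
  norm_pos_iff.mp ((norm_nonneg _).trans_lt (norm_sub_lt_norm_add_conj hp hq))

lemma norm_sub_div_add_conj_lt_one (hp : 0 < p.re) (hq : 0 < q.re) :
    ‖(p - q) / (p + conj q)‖ < 1 := by
  rw [norm_div, div_lt_one (norm_pos_iff.mpr (add_conj_ne_zero hp hq))]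
  exact norm_sub_lt_norm_add_conj hp hq

end RightHalfPlane

section SchwarzPick

variable {f : ℂ → ℂ} {a z : ℂ}

theorem norm_sub_mul_le_of_re_pos (hf : DifferentiableOn ℂ f (ball 0 1))
    (hre : ∀ w ∈ ball (0 : ℂ) 1, 0 < (f w).re) (ha : a ∈ ball (0 : ℂ) 1)
    (hz : z ∈ ball (0 : ℂ) 1) :
    ‖f z - f a‖ * ‖1 - conj a * z‖ ≤ ‖a - z‖ * ‖f z + conj (f a)‖ := by
  have hfa := hre a ha
  have hfφ : ∀ w ∈ ball (0 : ℂ) 1, 0 < (f (diskInvolution a w)).re := fun w hw =>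
    hre _ (diskInvolution_mem_ball ha hw)
  set g : ℂ → ℂ := fun w => (f (diskInvolution a w) - f a) / (f (diskInvolution a w) + conj (f a))
  have hg : DifferentiableOn ℂ g (ball 0 1) := by
    have h := hf.comp (differentiableOn_diskInvolution ha) (mapsTo_diskInvolution ha)
    exact (h.sub (differentiableOn_const _)).div (h.add (differentiableOn_const _))
      fun w hw => add_conj_ne_zero (hfφ w hw) hfa
  have hg_maps : Set.MapsTo g (ball 0 1) (closedBall 0 1) := fun w hw =>
    mem_closedBall_zero_iff.mpr (norm_sub_div_add_conj_lt_one (hfφ w hw) hfa).le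
  have hg0 : g 0 = 0 := by simp [g, diskInvolution_zero]
  have schwarz := norm_le_norm_of_mapsTo_ball hg hg_maps hg0
    (mem_ball_zero_iff.mp (diskInvolution_mem_ball ha hz))
  simp only [g, diskInvolution_diskInvolution ha hz] at schwarz
  rwa [diskInvolution, norm_div, norm_div,
    div_le_div_iff₀ (norm_pos_iff.mpr (add_conj_ne_zero (hre z hz) hfa))
      (norm_pos_iff.mpr (one_sub_conj_mul_ne_zero ha hz))] at schwarz

theorem normSq_add_conj_le_of_re_pos (hf : DifferentiableOn ℂ f (ball 0 1))
    (hre : ∀ w ∈ ball (0 : ℂ) 1, 0 < (f w).re) (ha : a ∈ ball (0 : ℂ) 1)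
    (hz : z ∈ ball (0 : ℂ) 1) :
    (1 - normSq a) * (1 - normSq z) * normSq (f z + conj (f a))
      ≤ 4 * (f a).re * (f z).re * normSq (1 - conj a * z) := by
  have h := norm_sub_mul_le_of_re_pos hf hre ha hz
  have hsq : normSq (f z - f a) * normSq (1 - conj a * z)
      ≤ normSq (a - z) * normSq (f z + conj (f a)) := by
    simp only [← Complex.sq_norm, ← mul_pow]
    exact pow_le_pow_left₀ (by positivity) h 2
  have hH : normSq (f z - f a) = normSq (f z + conj (f a)) - 4 * (f z).re * (f a).re := by
    linarith [normSq_add_conj_sub_normSq_sub (f z) (f a)]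
  have hD : normSq (a - z) = normSq (1 - conj a * z) - (1 - normSq a) * (1 - normSq z) := by
    linarith [normSq_one_sub_conj_mul_sub_normSq_sub a z]
  rw [hH, hD] at hsq
  linear_combination hsq

end SchwarzPick

end Complex

lemma tendsto_ofReal_nhdsLT_stolzRegion {K : ℝ} (hK : 1 < K) :
    Tendsto (fun r : ℝ => (r : ℂ)) (𝓝[<] 1) (𝓝[stolzRegion K] 1) := by
  refine tendsto_nhdsWithin_iff.mpr ⟨?_, ?_⟩
  · simpa using (continuous_ofReal.tendsto 1).mono_left nhdsWithin_le_nhds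
  · filter_upwards [Ioo_mem_nhdsLT (zero_lt_one' ℝ)] with r ⟨hr0, hr1⟩
    have hnorm : ‖(r : ℂ)‖ = r := by rw [norm_real, Real.norm_of_nonneg hr0.le]
    refine ⟨by rwa [hnorm], ?_⟩
    rw [hnorm, ← ofReal_one, ← ofReal_sub, norm_real, Real.norm_of_nonpos (by linarith)]
    nlinarith

theorem normSq_mul_le_re_mul_of_tendsto {f : ℂ → ℂ} (hf : DifferentiableOn ℂ f (ball 0 1))
    (hre : ∀ w ∈ ball (0 : ℂ) 1, 0 < (f w).re) {L : ℂ}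
    (hL : Tendsto (fun r : ℝ => (1 - r) * f r) (𝓝[<] 1) (𝓝 L)) {z : ℂ}
    (hz : z ∈ ball (0 : ℂ) 1) :
    (1 - normSq z) * normSq L ≤ 2 * L.re * (f z).re * normSq (1 - z) := by
  have hr : Tendsto (fun r : ℝ => r) (𝓝[<] 1) (𝓝 1) := tendsto_id.mono_left nhdsWithin_le_nhds
  have hrC : Tendsto (fun r : ℝ => (r : ℂ)) (𝓝[<] 1) (𝓝 1) := by
    simpa [Function.comp_def] using (continuous_ofReal.tendsto 1).comp hr
  have hlhs : Tendsto (fun r : ℝ => (1 + r) * (1 - normSq z) *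
      normSq ((1 - r) * f z + conj ((1 - r) * f r))) (𝓝[<] 1)
      (𝓝 (2 * (1 - normSq z) * normSq L)) := by
    have hsum : Tendsto (fun r : ℝ => (1 - r) * f z + conj ((1 - r) * f r)) (𝓝[<] 1)
        (𝓝 (conj L)) := by
      simpa using (((tendsto_const_nhds (x := (1 : ℂ))).sub hrC).mul_const (f z)).add
        ((continuous_conj.tendsto L).comp hL)
    have hcoef : Tendsto (fun r : ℝ => (1 + r) * (1 - normSq z)) (𝓝[<] 1)
        (𝓝 (2 * (1 - normSq z))) := by
      simpa [one_add_one_eq_two] using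
        ((tendsto_const_nhds (x := (1 : ℝ))).add hr).mul_const (1 - normSq z)
    simpa using hcoef.mul ((continuous_normSq.tendsto _).comp hsum)
  have hrhs : Tendsto (fun r : ℝ => 4 * ((1 - r) * f r).re * (f z).re * normSq (1 - r * z))
      (𝓝[<] 1) (𝓝 (4 * L.re * (f z).re * normSq (1 - z))) := by
    have hD := (continuous_normSq.tendsto _).comp
      ((tendsto_const_nhds (x := (1 : ℂ))).sub (hrC.mul_const z))
    simpa using (((continuous_re.tendsto L).comp hL).const_mul 4 |>.mul_const (f z).re).mul hD
  have hpick : ∀ᶠ r : ℝ in 𝓝[<] 1, (1 + r) * (1 - normSq z) *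
      normSq ((1 - r) * f z + conj ((1 - r) * f r))
        ≤ 4 * ((1 - r) * f r).re * (f z).re * normSq (1 - r * z) := by
    filter_upwards [Ioo_mem_nhdsLT (show (-1 : ℝ) < 1 by norm_num)] with r ⟨hr0, hr1⟩
    have hrb : (r : ℂ) ∈ ball (0 : ℂ) 1 := by
      rw [mem_ball_zero_iff, norm_real, Real.norm_eq_abs, abs_lt]
      exact ⟨hr0, hr1⟩
    have h := normSq_add_conj_le_of_re_pos hf hre hrb hz
    rw [conj_ofReal, normSq_ofReal] at h
    have hsum :
        (1 - r) * f z + conj ((1 - r) * f r) = ((1 - r : ℝ) : ℂ) * (f z + conj (f r)) := by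
      simp only [map_mul, map_sub, map_one, conj_ofReal]
      push_cast
      ring
    have hre_mul : ((1 - r) * f r).re = (1 - r) * (f r).re := by
      rw [← ofReal_one, ← ofReal_sub, re_ofReal_mul]
    rw [hsum, normSq_mul, normSq_ofReal, hre_mul]
    linear_combination mul_le_mul_of_nonneg_left h (sub_nonneg.mpr hr1.le)
  have := le_of_tendsto_of_tendsto hlhs hrhs hpick
  linarith

lemma unitDisk_eq_ball : unitDisk = ball (0 : ℂ) 1 := by
  ext z
  simp [unitDisk]

theorem julia_lower_bound (α : ℝ) (hα : α ∈ Set.Ioo (0 : ℝ) 1) (f₁ : ℂ → ℂ)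
    (hf : DifferentiableOn ℂ f₁ unitDisk)
    (hre : ∀ z ∈ unitDisk, 0 < (f₁ z).re)
    (hlim : ∀ K > (1 : ℝ),
      Tendsto (fun z => (1 - z) * f₁ z) (nhdsWithin 1 (stolzRegion K))
        (nhds ((2 : ℂ) / α))) :
    ∀ z ∈ unitDisk,
      (1 / α) * ((1 - ‖z‖ ^ 2) / ‖1 - z‖ ^ 2) ≤ (f₁ z).re := by
  rw [unitDisk_eq_ball] at hf hre ⊢
  intro z hz
  have hL : Tendsto (fun r : ℝ => (1 - r) * f₁ r) (𝓝[<] 1) (𝓝 ((2 / α : ℝ) : ℂ)) := by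
    simpa [Function.comp_def] using
      (hlim 2 one_lt_two).comp (tendsto_ofReal_nhdsLT_stolzRegion one_lt_two)
  have key := normSq_mul_le_re_mul_of_tendsto hf hre hL hz
  rw [normSq_ofReal, ofReal_re] at key
  have hα0 : 0 < α := hα.1
  have hz1 : 0 < normSq (1 - z) := normSq_pos.mpr (sub_ne_zero.mpr (by
    rintro rfl
    simp at hz))
  field_simp at key
  rw [Complex.sq_norm, Complex.sq_norm, one_div_mul_eq_div, div_div, div_le_iff₀ (by positivity)]
  linarith
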